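/- arXiv:2509.02553 — 4 statements merged into one kernel-verified Lean document; each statement's English description precedes it below -/
import Mathlib

section
/- Let n be a positive integer and m a natural number. Given a tuple y : Fin n → ℤ that is monotone (y i ≤ y j whenever i ≤ j) and satisfies the wrap-around condition y(n−1) ≤ y(0) + m, there exists a ℤ-equivariant monotone map of level (n, m), i.e., a monotone function f : ℤ → ℤ with f(x + n) = f(x) + m for all x ∈ ℤ, such that f(k) = y(k) for all 0 ≤ k < n. -/
/-- Any monotone tuple `y : Fin n → ℤ` with `y (n-1) ≤ y 0 + m` extends to a
ℤ-equivariant monotone map of level `(n, m)`, i.e. a monotone `f : ℤ → ℤ` with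
`f (x + n) = f x + m` for all `x`, such that `f k = y k` for `0 ≤ k < n`. -/
theorem exists_equivariant_monotone_extension
    (n m : ℕ) (hn : 0 < n) (y : Fin n → ℤ) (hy : Monotone y)
    (hwrap : y ⟨n - 1, Nat.sub_lt hn Nat.one_pos⟩ ≤ y ⟨0, hn⟩ + m) :
    ∃ f : ℤ → ℤ, Monotone f ∧ (∀ x : ℤ, f (x + n) = f x + m) ∧
      ∀ k : Fin n, f k.val = y k := by
  have hn' : (0 : ℤ) < (n : ℤ) := by exact_mod_cast hn
  have hmod : ∀ x : ℤ, (x % (n : ℤ)).toNat < n := by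
    intro x
    have h0 : 0 ≤ x % (n : ℤ) := Int.emod_nonneg x (by omega)
    have h1 : x % (n : ℤ) < n := Int.emod_lt_of_pos x hn'
    omega
  set f : ℤ → ℤ := fun x => y ⟨(x % (n : ℤ)).toNat, hmod x⟩ + m * (x / (n : ℤ)) with hf
  have key : ∀ x : ℤ, f x ≤ f (x + 1) := by
    intro x
    have hx : (n : ℤ) * (x / n) + x % n = x := Int.mul_ediv_add_emod x n
    have h0 : 0 ≤ x % (n : ℤ) := Int.emod_nonneg x (by omega)
    have h1 : x % (n : ℤ) < n := Int.emod_lt_of_pos x hn'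
    rcases lt_or_eq_of_le (by omega : x % (n : ℤ) + 1 ≤ n) with hlt | heq
    · -- no wrap
      have e1 : (x + 1) % (n : ℤ) = x % n + 1 := by
        have hrw : x + 1 = (x % n + 1) + (n : ℤ) * (x / n) := by omega
        rw [hrw, Int.add_mul_emod_self_left, Int.emod_eq_of_lt (by omega) hlt]
      have e2 : (x + 1) / (n : ℤ) = x / n := by
        have hrw : x + 1 = (x % n + 1) + (x / n) * (n : ℤ) := by
          rw [mul_comm]; omega
        rw [hrw, Int.add_mul_ediv_right _ _ (by omega : (n:ℤ) ≠ 0),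
          Int.ediv_eq_zero_of_lt (by omega) hlt, zero_add]
      have hle : (⟨(x % (n:ℤ)).toNat, hmod x⟩ : Fin n)
          ≤ ⟨((x + 1) % (n:ℤ)).toNat, hmod (x + 1)⟩ := by
        simp only [Fin.mk_le_mk, e1]; omega
      have hyy := hy hle
      simp only [hf, e2]
      linarith
    · -- wrap
      have e1 : (x + 1) % (n : ℤ) = 0 := by
        have hrw : x + 1 = (n : ℤ) * (x / n + 1) := by rw [mul_add, mul_one]; omega
        rw [hrw, Int.mul_emod_right]
      have e2 : (x + 1) / (n : ℤ) = x / n + 1 := by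
        have hrw : x + 1 = 0 + (x / n + 1) * (n : ℤ) := by
          rw [zero_add, add_mul, one_mul, mul_comm]; omega
        rw [hrw, Int.add_mul_ediv_right _ _ (by omega : (n:ℤ) ≠ 0), Int.zero_ediv, zero_add]
      have hfin : (⟨(x % (n:ℤ)).toNat, hmod x⟩ : Fin n) = ⟨n - 1, Nat.sub_lt hn Nat.one_pos⟩ := by
        ext; simp only []; omega
      have hfin2 : (⟨((x + 1) % (n:ℤ)).toNat, hmod (x + 1)⟩ : Fin n) = ⟨0, hn⟩ := by
        ext; simp [e1]
      simp only [hf, hfin, hfin2, e2]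
      have hm : (m : ℤ) * (x / n + 1) = m * (x / n) + m := by ring
      linarith
  refine ⟨f, monotone_int_of_le_succ key, ?_, ?_⟩
  · intro x
    have e1 : (x + (n : ℤ)) % (n : ℤ) = x % n := by
      have hrw : x + (n : ℤ) = x + (n : ℤ) * 1 := by ring
      rw [hrw, Int.add_mul_emod_self_left]
    have e2 : (x + (n : ℤ)) / (n : ℤ) = x / n + 1 := by
      have hrw : x + (n : ℤ) = x + 1 * (n : ℤ) := by ring
      rw [hrw, Int.add_mul_ediv_right _ _ (by omega : (n:ℤ) ≠ 0)]
    simp only [hf, e1, e2]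
    ring
  · intro k
    have hk : ((k.val : ℤ)) % (n : ℤ) = k.val :=
      Int.emod_eq_of_lt (by positivity) (by exact_mod_cast k.isLt)
    have hd : ((k.val : ℤ)) / (n : ℤ) = 0 :=
      Int.ediv_eq_zero_of_lt (by positivity) (by exact_mod_cast k.isLt)
    simp only [hf, hk, hd, mul_zero, add_zero, Int.toNat_natCast]
end

section
/- Let n be a positive integer and m a natural number. The restriction map f ↦ (f(0), f(1), …, f(n−1)), from the set of ℤ-equivariant monotone maps of level (n, m) (monotone functions f : ℤ → ℤ with f(x + n) = f(x) + m for all x) to the set of monotone tuples y : Fin n → ℤ satisfying y(n−1) ≤ y(0) + m, is a bijection. -/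
/-- ℤ-equivariant monotone maps of level `(n, m)`: monotone functions `f : ℤ → ℤ`
with `f (x + n) = f x + m` for all `x : ℤ`. These model morphisms
`(1/n)ℤ → (1/m)ℤ` in the paracyclic category `Λ∞`. -/
def EquivariantMonotoneMap (n m : ℕ) : Type :=
  {f : ℤ → ℤ // Monotone f ∧ ∀ x : ℤ, f (x + n) = f x + m}

/-- Monotone tuples `y : Fin n → ℤ` satisfying the wrap-around condition
`y (n-1) ≤ y 0 + m`. -/
def WrapMonotoneTuple (n m : ℕ) (hn : 0 < n) : Type :=
  {y : Fin n → ℤ //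
    Monotone y ∧ y ⟨n - 1, Nat.sub_lt hn Nat.one_pos⟩ ≤ y ⟨0, hn⟩ + m}

/-- The restriction map `f ↦ (f 0, f 1, …, f (n-1))`. -/
def restrictEquivariant (n m : ℕ) (hn : 0 < n) :
    EquivariantMonotoneMap n m → WrapMonotoneTuple n m hn :=
  fun f =>
    ⟨fun k => f.1 k.val, by
      constructor
      · intro k k' hk
        exact f.2.1 (Int.ofNat_le.mpr hk)
      · show f.1 ((n - 1 : ℕ) : ℤ) ≤ f.1 ((0 : ℕ) : ℤ) + m
        have h1 : f.1 ((0 : ℤ) + n) = f.1 0 + m := f.2.2 0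
        have h2 : ((n - 1 : ℕ) : ℤ) ≤ (0 : ℤ) + (n : ℤ) := by omega
        have h3 := f.2.1 h2
        simp only [Nat.cast_zero]
        linarith⟩

/-! An equivariant map is determined by its values on the fundamental domain `{0, …, n-1}`:
writing `x = r + n q` with `0 ≤ r < n` gives `f x = f r + m q`. Conversely any tuple `y`
extends by this formula, and the extension is monotone exactly because of the wrap-around
condition, which makes every value `y i` at most `y j + m`. -/

theorem map_add_mul_of_map_add {f : ℤ → ℤ} {a b : ℤ} (hf : ∀ x, f (x + a) = f x + b)
    (x q : ℤ) : f (x + a * q) = f x + b * q := by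
  induction q using Int.induction_on with
  | zero => simp
  | succ k ih => rw [mul_add_one, ← add_assoc, hf, ih, mul_add_one, add_assoc]
  | pred k ih =>
    have h := hf (x + a * (-k - 1))
    rw [add_assoc, ← mul_add_one, sub_add_cancel, ih] at h
    linarith

section

variable {n m : ℕ} (hn : 0 < n)

def residue (x : ℤ) : Fin n :=
  ⟨(x % n).toNat, by have := Int.emod_lt_of_pos x (Int.natCast_pos.mpr hn); omega⟩

theorem natCast_residue (x : ℤ) : ((residue hn x : ℕ) : ℤ) = x % n :=
  Int.toNat_of_nonneg (Int.emod_nonneg x (Int.natCast_ne_zero.mpr hn.ne'))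

theorem residue_natCast (k : Fin n) : residue hn k = k :=
  Fin.ext <| by simp [residue, Int.emod_eq_of_lt, k.isLt]

theorem residue_add_self (x : ℤ) : residue hn (x + n) = residue hn x :=
  Fin.ext <| by simp only [residue, Int.add_emod_right]

theorem WrapMonotoneTuple.le_add (y : WrapMonotoneTuple n m hn) (i j : Fin n) :
    y.1 i ≤ y.1 j + m :=
  calc y.1 i ≤ y.1 ⟨n - 1, Nat.sub_lt hn Nat.one_pos⟩ :=
        y.2.1 (Fin.le_def.mpr (Nat.le_sub_one_of_lt i.isLt))
    _ ≤ y.1 ⟨0, hn⟩ + m := y.2.2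
    _ ≤ y.1 j + m := by linarith [y.2.1 (show (⟨0, hn⟩ : Fin n) ≤ j from Nat.zero_le _)]

def extendEquivariant (y : WrapMonotoneTuple n m hn) : EquivariantMonotoneMap n m := by
  refine ⟨fun x => y.1 (residue hn x) + m * (x / n), ?_, fun x => ?_⟩
  · intro x x' hx
    obtain hq | hq := (Int.ediv_le_ediv (Int.natCast_pos.mpr hn) hx).eq_or_lt
    · have hr : residue hn x ≤ residue hn x' := by
        rw [Fin.le_def, ← Int.ofNat_le, natCast_residue, natCast_residue, Int.emod_def,
          Int.emod_def, hq]
        omega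
      simp only [hq]
      linarith [y.2.1 hr]
    -- when the quotient jumps, the wrap-around bound `y i ≤ y j + m` pays for one step of it
    · have hm : (m : ℤ) * (x / n + 1) ≤ m * (x' / n) := by gcongr; exact hq
      linarith [y.le_add hn (residue hn x) (residue hn x')]
  · simp only [residue_add_self, Int.add_ediv_of_dvd_right (dvd_refl (n : ℤ)),
      Int.ediv_self (Int.natCast_ne_zero.mpr hn.ne')]
    ring

theorem restrict_extendEquivariant (y : WrapMonotoneTuple n m hn) :
    restrictEquivariant n m hn (extendEquivariant hn y) = y :=
  Subtype.ext <| funext fun k => by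
    simp [restrictEquivariant, extendEquivariant, residue_natCast, Int.ediv_eq_zero_of_lt]

theorem extendEquivariant_restrict (f : EquivariantMonotoneMap n m) :
    extendEquivariant hn (restrictEquivariant n m hn f) = f :=
  Subtype.ext <| funext fun x => by
    conv_rhs => rw [← Int.emod_add_mul_ediv x n, map_add_mul_of_map_add f.2.2]
    simp only [restrictEquivariant, extendEquivariant, natCast_residue]

end

/-- The restriction map from ℤ-equivariant monotone maps of level `(n, m)` to monotone
tuples satisfying the wrap-around condition is a bijection. -/
theorem bijective_restrictEquivariant (n m : ℕ) (hn : 0 < n) :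
    Function.Bijective (restrictEquivariant n m hn) :=
  Function.bijective_iff_has_inverse.mpr
    ⟨extendEquivariant hn, extendEquivariant_restrict hn, restrict_extendEquivariant hn⟩
end

section
/- Let A be a commutative ring, B a commutative A-algebra, and G a finite group acting on B by ring automorphisms that fix the image of A pointwise. Let h : B ⊗[A] B → (G → B) be the A-algebra homomorphism determined by h(b₁ ⊗ b₂)(g) = b₁ * (g • b₂), and let μ : B ⊗[A] B → B be the multiplication map determined by μ(b₁ ⊗ b₂) = b₁ * b₂. If h is bijective, then B ⊗[A] B contains a separability idempotent: there exists ε ∈ B ⊗[A] B with ε * ε = ε, μ(ε) = 1, and (b ⊗ 1) * ε = (1 ⊗ b) * ε for all b ∈ B (namely, ε is the preimage under h of the indicator function of the identity element of G). -/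
open TensorProduct

/-- If `G` is a finite group acting on the commutative `A`-algebra `B` by ring
automorphisms fixing `A`, and the canonical map `h : B ⊗[A] B → (G → B)`,
`h (b₁ ⊗ b₂) g = b₁ * (g • b₂)`, is bijective, then `B ⊗[A] B` contains a
separability idempotent. -/
theorem exists_separability_idempotent_of_galois
    (A B : Type) [CommRing A] [CommRing B] [Algebra A B]
    (G : Type) [Group G] [Finite G] [MulSemiringAction G B]
    (hGA : ∀ (g : G) (a : A), g • (algebraMap A B a) = algebraMap A B a)
    (h : (B ⊗[A] B) →ₐ[A] (G → B))
    (hh : ∀ (b₁ b₂ : B) (g : G), h (b₁ ⊗ₜ[A] b₂) g = b₁ * (g • b₂))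
    (hbij : Function.Bijective h) :
    ∃ ε : B ⊗[A] B, ε * ε = ε ∧ Algebra.TensorProduct.lmul' A (S := B) ε = 1 ∧
      ∀ b : B, (b ⊗ₜ[A] (1 : B)) * ε = ((1 : B) ⊗ₜ[A] b) * ε := by
  classical
  set χ : G → B := fun g => if g = 1 then 1 else 0 with hχ
  obtain ⟨ε, hε⟩ := hbij.2 χ
  have hmu : ∀ x : B ⊗[A] B, Algebra.TensorProduct.lmul' A (S := B) x = h x 1 := by
    intro x
    induction x using TensorProduct.induction_on with
    | zero => simp
    | tmul b₁ b₂ => simp [hh, one_smul]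
    | add x y hx hy => simp [map_add, hx, hy, Pi.add_apply]
  refine ⟨ε, ?_, ?_, ?_⟩
  · apply hbij.1
    rw [map_mul, hε]
    funext g
    simp only [Pi.mul_apply, hχ]
    split_ifs <;> simp
  · rw [hmu, hε]; simp [hχ]
  · intro b
    apply hbij.1
    rw [map_mul, map_mul, hε]
    funext g
    simp only [Pi.mul_apply, hh, hχ]
    split_ifs with hg
    · subst hg; simp [one_smul, smul_one]
    · simp
end

section
/- Let A be a commutative ring, B a commutative A-algebra, and G a finite group acting on B by ring automorphisms that fix the image of A pointwise. Let h : B ⊗[A] B → (G → B) be the A-algebra homomorphism determined by h(b₁ ⊗ b₂)(g) = b₁ * (g • b₂), and let μ : B ⊗[A] B → B be the multiplication map determined by μ(b₁ ⊗ b₂) = b₁ * b₂. If h is bijective, then B is projective as a module over B ⊗[A] B, where the module structure on B is restriction of scalars along μ. -/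
open TensorProduct

/-- If `G` is a finite group acting on the commutative `A`-algebra `B` by ring
automorphisms fixing `A`, and the canonical map `h : B ⊗[A] B → (G → B)`,
`h (b₁ ⊗ b₂) g = b₁ * (g • b₂)`, is bijective, then `B` is projective as a module over
`B ⊗[A] B`, the module structure being restriction of scalars along the multiplication
map `μ = Algebra.TensorProduct.lmul' A : B ⊗[A] B → B`. -/
theorem projective_of_galois
    (A B : Type) [CommRing A] [CommRing B] [Algebra A B]
    (G : Type) [Group G] [Finite G] [MulSemiringAction G B]
    (hGA : ∀ (g : G) (a : A), g • (algebraMap A B a) = algebraMap A B a)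
    (h : (B ⊗[A] B) →ₐ[A] (G → B))
    (hh : ∀ (b₁ b₂ : B) (g : G), h (b₁ ⊗ₜ[A] b₂) g = b₁ * (g • b₂))
    (hbij : Function.Bijective h) :
    letI : Module (B ⊗[A] B) B :=
      Module.compHom B (Algebra.TensorProduct.lmul' A (S := B)).toRingHom
    Module.Projective (B ⊗[A] B) B := by
  classical
  letI : Module (B ⊗[A] B) B :=
    Module.compHom B (Algebra.TensorProduct.lmul' A (S := B)).toRingHom
  let μ : (B ⊗[A] B) →+* B := (Algebra.TensorProduct.lmul' A (S := B)).toRingHom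
  have hsmul : ∀ (r : B ⊗[A] B) (b : B), r • b = μ r * b := fun r b => rfl
  have hμtmul : ∀ x y : B, μ (x ⊗ₜ[A] y) = x * y := fun x y =>
    Algebra.TensorProduct.lmul'_apply_tmul x y
  have hμeval : ∀ r : B ⊗[A] B, h r 1 = μ r := by
    intro r
    induction r using TensorProduct.induction_on with
    | zero => simp
    | tmul x y => rw [hh, one_smul, hμtmul]
    | add x y hx hy => rw [map_add, map_add, Pi.add_apply, hx, hy]
  obtain ⟨e, he⟩ := hbij.surjective (fun g => if g = 1 then (1 : B) else 0)
  have key : ∀ r : B ⊗[A] B, e * ((μ r) ⊗ₜ[A] (1 : B)) = e * r := by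
    intro r
    apply hbij.injective
    funext g
    have h1 : h (μ r ⊗ₜ[A] 1) g = μ r := by rw [hh, smul_one, mul_one]
    rw [map_mul, map_mul, he, Pi.mul_apply, Pi.mul_apply, h1]
    by_cases hg : g = 1
    · subst hg; simp [hμeval]
    · simp [hg]
  have hμe : μ e = 1 := by rw [← hμeval, he]; simp
  let f : (B ⊗[A] B) →ₗ[B ⊗[A] B] B :=
    { toFun := μ
      map_add' := map_add μ
      map_smul' := by
        intro r x
        simp only [RingHom.id_apply, smul_eq_mul, map_mul, hsmul] }
  let s : B →ₗ[B ⊗[A] B] (B ⊗[A] B) :=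
    { toFun := fun b => e * (b ⊗ₜ[A] 1)
      map_add' := by
        intro b c
        show e * ((b + c) ⊗ₜ[A] 1) = e * (b ⊗ₜ[A] 1) + e * (c ⊗ₜ[A] 1)
        rw [TensorProduct.add_tmul, mul_add]
      map_smul' := by
        intro r b
        simp only [RingHom.id_apply, smul_eq_mul, hsmul]
        calc e * ((μ r * b) ⊗ₜ[A] (1 : B))
            = (e * (μ r ⊗ₜ[A] (1 : B))) * (b ⊗ₜ[A] (1 : B)) := by
              rw [mul_assoc, Algebra.TensorProduct.tmul_mul_tmul, mul_one]
          _ = r * (e * (b ⊗ₜ[A] 1)) := by rw [key]; ring }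
  have split : f.comp s = LinearMap.id := by
    ext b
    simp only [LinearMap.comp_apply, LinearMap.id_apply, f, s, LinearMap.coe_mk,
      AddHom.coe_mk, map_mul, hμe, hμtmul, one_mul, mul_one]
  exact Module.Projective.of_split s f split
end
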